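/- For a prime implication filter P of an MV-algebra L, the poset of prime implication filters of the quotient L/ℓ(P) is order-isomorphic to the poset PSpec(P) of prime implication filters of L comparable to P, ordered by inclusion. -/

import Mathlib

/-- An MV-algebra `(α, ⊕, ¬, 0)` with the standard axioms. -/
class MV (α : Type*) extends Add α, Neg α, Zero α where
  add_assoc : ∀ a b c : α, a + (b + c) = (a + b) + c
  add_comm : ∀ a b : α, a + b = b + a
  add_zero : ∀ a : α, a + 0 = a
  neg_neg : ∀ a : α, - -a = a
  add_neg_zero : ∀ a : α, a + -(0 : α) = -(0 : α)
  luk : ∀ a b : α, -(-a + b) + b = -(-b + a) + a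

namespace MV

variable {α : Type*} [MV α]

/-- The top element `1 = ¬0`. -/
def one (α : Type*) [MV α] : α := -(0 : α)

/-- Implication `x → y = ¬x ⊕ y`. -/
def imp (a b : α) : α := -a + b

/-- Strong conjunction `x ⊗ y = ¬(¬x ⊕ ¬y)`. -/
def otimes (a b : α) : α := -(-a + -b)

/-- Join `x ∨ y = (x → y) → y`. -/
def sup (a b : α) : α := imp (imp a b) b

/-- Meet `x ∧ y = ¬(¬x ∨ ¬y)`. -/
def inf (a b : α) : α := -(sup (-a) (-b))

/-- Order: `x ≤ y` iff `x → y = 1`. -/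
def le (a b : α) : Prop := imp a b = one α

/-- Strict order. -/
def lt (a b : α) : Prop := le a b ∧ a ≠ b

/-- `n`-fold `⊗`-power. -/
def pow (a : α) : ℕ → α
  | 0 => one α
  | n + 1 => otimes a (pow a n)

/-- An implication filter: a lattice filter closed under `⊗`. -/
def IsImpFilter (F : Set α) : Prop :=
  one α ∈ F ∧ (∀ x ∈ F, ∀ y : α, le x y → y ∈ F) ∧
    (∀ x ∈ F, ∀ y ∈ F, inf x y ∈ F) ∧ (∀ x ∈ F, ∀ y ∈ F, otimes x y ∈ F)

/-- A prime implication filter: proper and `x ∨ y ∈ F → x ∈ F ∨ y ∈ F`. -/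
def IsPrime (F : Set α) : Prop :=
  IsImpFilter F ∧ F ≠ Set.univ ∧ ∀ x y : α, sup x y ∈ F → x ∈ F ∨ y ∈ F

/-- A minimal prime implication filter. -/
def IsMinimalPrime (F : Set α) : Prop :=
  IsPrime F ∧ ∀ G : Set α, IsPrime G → G ⊆ F → G = F

/-- A maximal proper implication filter. -/
def IsMaximal (F : Set α) : Prop :=
  IsImpFilter F ∧ F ≠ Set.univ ∧
    ∀ G : Set α, IsImpFilter G → G ≠ Set.univ → F ⊆ G → G = F

/-- A counit: `u < 1` joining to `1` with some `v < 1`. -/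
def IsCounit (u : α) : Prop :=
  lt u (one α) ∧ ∃ v : α, lt v (one α) ∧ sup u v = one α

/-- The implication filter generated by a set. -/
def gen (S : Set α) : Set α := ⋂₀ {F : Set α | IsImpFilter F ∧ S ⊆ F}

/-- The Conrad filter: the implication filter generated by all counits. -/
def conrad (α : Type*) [MV α] : Set α := gen {u : α | IsCounit u}

/-- The localizing filter `ℓ(P)`, generated by `{x → p : p ∈ P, x ∉ P}`. -/
def locFilter (P : Set α) : Set α :=
  gen {z : α | ∃ x : α, x ∉ P ∧ ∃ p ∈ P, z = imp x p}

end MV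

/-!
A surjective MV-morphism `f : α → β` whose `1`-class is a filter `K` puts the prime filters of
`β` in inclusion-preserving bijection with the prime filters of `α` containing `K`, via
`F ↦ f⁻¹ F` and `G ↦ f G`.  For `K = ℓ(P)` the latter are exactly the primes comparable with `P`:
if `x ∈ G \ P` then `x → p ∈ ℓ(P) ⊆ G` forces `P ⊆ G`; conversely, if `G ⊆ P`, prelinearity
`(x → p) ∨ (p → x) = 1` and primality of `G` put `x → p` or `p → x` in `G`, and the latter
would give `x ∈ P`.
-/

namespace MV

variable {α β : Type*} [MV α] [MV β]

section Arithmetic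

lemma add_one (a : α) : a + one α = one α := add_neg_zero a

lemma one_add (a : α) : one α + a = one α := by rw [MV.add_comm]; exact add_one a

lemma neg_one : -(one α) = (0 : α) := MV.neg_neg 0

lemma zero_add (a : α) : (0 : α) + a = a := by rw [MV.add_comm]; exact MV.add_zero a

lemma neg_add_self (a : α) : -a + a = one α := by
  have h := luk (one α) a
  rwa [neg_one, zero_add, add_one] at h

lemma add_neg_self (a : α) : a + -a = one α := by rw [MV.add_comm]; exact neg_add_self a

lemma neg_add (a b : α) : -(a + b) = otimes (-a) (-b) := by
  simp only [otimes, MV.neg_neg]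

lemma neg_otimes (a b : α) : -(otimes a b) = -a + -b := MV.neg_neg _

lemma otimes_comm (a b : α) : otimes a b = otimes b a := by
  simp only [otimes, MV.add_comm (-a)]

lemma otimes_right_comm (x w v : α) : otimes (otimes x w) v = otimes (otimes x v) w := by
  show -(-(otimes x w) + -v) = -(-(otimes x v) + -w)
  rw [neg_otimes, neg_otimes, ← MV.add_assoc, ← MV.add_assoc, MV.add_comm (-w) (-v)]

lemma sup_comm (a b : α) : sup a b = sup b a := luk a b

lemma neg_sup (a b : α) : -(sup a b) = inf (-a) (-b) := by
  simp only [inf, MV.neg_neg]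

lemma sup_eq_otimes_add (a b : α) : sup a b = otimes a (-b) + b := by
  simp only [sup, imp, otimes, MV.neg_neg]

lemma otimes_imp_eq_inf (a b : α) : otimes a (imp a b) = inf a b := by
  show -(-a + -(-a + b)) = -(-(- -a + -b) + -b)
  rw [luk (-a) (-b), MV.neg_neg, MV.add_comm b (-a), MV.add_comm (-a) (-(-a + b))]

end Arithmetic

section Order

lemma le_refl (a : α) : le a a := neg_add_self a

lemma zero_le (a : α) : le (0 : α) a := by
  show -(0 : α) + a = one α
  rw [MV.add_comm]
  exact add_neg_zero a

lemma one_le_iff {a : α} : le (one α) a ↔ a = one α := by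
  show -(one α) + a = one α ↔ _
  rw [neg_one, zero_add]

lemma add_le_add_right {a b : α} (h : le a b) (c : α) : le (a + c) (b + c) := by
  show -(a + c) + (b + c) = one α
  calc -(a + c) + (b + c) = -(- -a + c) + (c + b) := by rw [MV.neg_neg, MV.add_comm b c]
    _ = (-(-c + -a) + -a) + b := by rw [MV.add_assoc, luk (-a) c]
    _ = one α := by rw [← MV.add_assoc, show -a + b = one α from h, add_one]

lemma le_trans {a b c : α} (hab : le a b) (hbc : le b c) : le a c := by
  have h := add_le_add_right hbc (-a)
  rw [MV.add_comm b (-a), MV.add_comm c (-a), show -a + b = one α from hab] at h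
  exact one_le_iff.mp h

lemma le_antisymm {a b : α} (hab : le a b) (hba : le b a) : a = b := by
  have h := luk a b
  rw [show -a + b = one α from hab, show -b + a = one α from hba, neg_one, zero_add,
    zero_add] at h
  exact h.symm

lemma neg_le_neg {a b : α} (h : le a b) : le (-b) (-a) := by
  show - -b + -a = one α
  rw [MV.neg_neg, MV.add_comm]
  exact h

lemma le_of_neg_le_neg {a b : α} (h : le (-b) (-a)) : le a b := by
  simpa only [MV.neg_neg] using neg_le_neg h

lemma le_neg_comm {a b : α} : le a (-b) ↔ le b (-a) := by
  show -a + -b = one α ↔ -b + -a = one α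
  rw [MV.add_comm]

lemma le_imp_self (p x : α) : le p (imp x p) := by
  show -p + (-x + p) = one α
  rw [MV.add_comm (-x) p, MV.add_assoc, neg_add_self, one_add]

end Order

section Lattice

lemma le_sup_left (a b : α) : le a (sup a b) := by
  show -a + (-(-a + b) + b) = one α
  rw [MV.add_comm (-(-a + b)) b, MV.add_assoc]
  exact add_neg_self (-a + b)

lemma le_sup_right (a b : α) : le b (sup a b) := by
  show -b + (-(-a + b) + b) = one α
  rw [MV.add_comm (-(-a + b)) b, MV.add_assoc, neg_add_self, one_add]

lemma sup_eq_right {a b : α} (h : le a b) : sup a b = b := by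
  show -(-a + b) + b = b
  rw [show -a + b = one α from h, neg_one, zero_add]

lemma sup_le {a b c : α} (hac : le a c) (hbc : le b c) : le (sup a b) c := by
  have h : le (sup a b) (sup c b) :=
    add_le_add_right (neg_le_neg (add_le_add_right (neg_le_neg hac) b)) b
  rwa [sup_comm c b, sup_eq_right hbc] at h

lemma inf_le_left (a b : α) : le (inf a b) a := by
  show - -(sup (-a) (-b)) + a = one α
  rw [MV.neg_neg, MV.add_comm]
  simpa only [le, imp, MV.neg_neg] using le_sup_left (-a) (-b)

lemma inf_le_right (a b : α) : le (inf a b) b := by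
  show - -(sup (-a) (-b)) + b = one α
  rw [MV.neg_neg, MV.add_comm]
  simpa only [le, imp, MV.neg_neg] using le_sup_right (-a) (-b)

lemma le_inf {z a b : α} (hza : le z a) (hzb : le z b) : le z (inf a b) :=
  le_neg_comm.mpr (sup_le (neg_le_neg hza) (neg_le_neg hzb))

lemma inf_eq_right {a b : α} (h : le b a) : inf a b = b :=
  le_antisymm (inf_le_right a b) (le_inf h (le_refl b))

end Lattice

section Residuation

lemma otimes_le_left (a b : α) : le (otimes a b) a := by
  show -(otimes a b) + a = one α
  rw [neg_otimes, MV.add_comm (-a) (-b), ← MV.add_assoc, neg_add_self, add_one]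

lemma otimes_le_right (a b : α) : le (otimes a b) b := by
  rw [otimes_comm]; exact otimes_le_left b a

lemma otimes_le_iff_le_imp {a b c : α} : le (otimes a b) c ↔ le a (imp b c) := by
  show -(otimes a b) + c = one α ↔ -a + (-b + c) = one α
  rw [neg_otimes, ← MV.add_assoc]

lemma otimes_imp_le (a b : α) : le (otimes a (imp a b)) b := by
  rw [otimes_imp_eq_inf]; exact inf_le_right a b

lemma imp_le_imp_left {c d : α} (h : le c d) (w : α) : le (imp w c) (imp w d) := by
  apply otimes_le_iff_le_imp.mp
  rw [otimes_comm, otimes_imp_eq_inf]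
  exact le_trans (inf_le_right w c) h

lemma otimes_le_otimes_left {b c : α} (h : le b c) (a : α) : le (otimes a b) (otimes a c) := by
  apply otimes_le_iff_le_imp.mpr
  have hac : le a (imp c (otimes a c)) := by
    show -a + (-c + otimes a c) = one α
    rw [MV.add_assoc]
    exact add_neg_self (-a + -c)
  exact le_trans hac (add_le_add_right (neg_le_neg h) (otimes a c))

end Residuation

section Prelinearity

/-- Half of the distributivity of `⊗` over `∧`; the hypothesis makes `w → (y ⊗ w) = y`. -/
lemma inf_otimes_le_otimes_inf {w x y : α} (hy : le (-w) y) :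
    le (inf (otimes x w) (otimes y w)) (otimes (inf x y) w) := by
  set t := inf (otimes x w) (otimes y w)
  have hw_cancel : imp w (otimes y w) = y := by
    show -w + otimes y w = y
    rw [MV.add_comm, show otimes y w + -w = sup y (-w) by rw [sup_eq_otimes_add, MV.neg_neg],
      sup_comm, sup_eq_right hy]
  have hwt : le (imp w t) y := hw_cancel ▸ imp_le_imp_left (inf_le_right _ _) w
  have hxwt : le (imp (otimes x w) t) (imp x y) := by
    rw [show imp (otimes x w) t = imp x (imp w t) by simp only [imp, neg_otimes, MV.add_assoc]]
    exact imp_le_imp_left hwt x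
  have h := otimes_le_otimes_left hxwt (otimes x w)
  rwa [otimes_imp_eq_inf, inf_eq_right (inf_le_left _ _), otimes_right_comm,
    otimes_imp_eq_inf] at h

lemma add_sup_le_sup_add {t a b : α} (hb : le t (-b)) :
    le (t + sup a b) (sup (t + a) (t + b)) := by
  apply le_of_neg_le_neg
  simp only [neg_add, neg_sup, otimes_comm (-t)]
  exact inf_otimes_le_otimes_inf (by rwa [MV.neg_neg])

lemma eq_zero_of_le_neg_of_add_le {t s : α} (hts : le t (-s)) (h : le (t + s) s) : t = 0 := by
  have ht : t = otimes (-s) (imp (-s) t) := by rw [otimes_imp_eq_inf, inf_eq_right hts]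
  simp only [imp, MV.neg_neg] at ht
  have hle : le t (otimes (-s) s) := by
    rw [ht]
    exact otimes_le_otimes_left (by rw [MV.add_comm]; exact h) (-s)
  rw [show otimes (-s) s = 0 by simp only [otimes, MV.neg_neg, add_neg_self, neg_one]] at hle
  exact le_antisymm hle (zero_le t)

lemma inf_otimes_neg_eq_zero (a b : α) : inf (otimes a (-b)) (otimes b (-a)) = 0 := by
  set t := inf (otimes a (-b)) (otimes b (-a))
  have hta : le t (-a) := le_trans (inf_le_right _ _) (otimes_le_right b (-a))
  have htb : le t (-b) := le_trans (inf_le_left _ _) (otimes_le_right a (-b))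
  have hsa : le (t + a) (sup a b) := by
    simpa only [← sup_eq_otimes_add, sup_comm b a]
      using add_le_add_right (inf_le_right (otimes a (-b)) (otimes b (-a))) a
  have hsb : le (t + b) (sup a b) := by
    simpa only [← sup_eq_otimes_add]
      using add_le_add_right (inf_le_left (otimes a (-b)) (otimes b (-a))) b
  refine eq_zero_of_le_neg_of_add_le (s := sup a b) ?_ ?_
  · rw [neg_sup]; exact le_inf hta htb
  · exact le_trans (add_sup_le_sup_add htb) (sup_le hsa hsb)

lemma sup_imp_imp_eq_one (a b : α) : sup (imp a b) (imp b a) = one α := by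
  have h : -(sup (imp a b) (imp b a)) = 0 := by
    simpa only [neg_sup, imp, neg_add, MV.neg_neg, otimes_comm (- -a), otimes_comm (- -b)]
      using inf_otimes_neg_eq_zero a b
  rw [← MV.neg_neg (sup _ _), h]
  rfl

end Prelinearity

section Filters

lemma IsImpFilter.mem_of_mem_imp {F : Set α} (hF : IsImpFilter F) {x y : α}
    (hx : x ∈ F) (hxy : imp x y ∈ F) : y ∈ F :=
  hF.2.1 _ (hF.2.2.2 x hx _ hxy) y (otimes_imp_le x y)

lemma IsImpFilter.eq_univ_of_zero_mem {F : Set α} (hF : IsImpFilter F) (h0 : (0 : α) ∈ F) :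
    F = Set.univ :=
  Set.eq_univ_of_forall fun y => hF.2.1 0 h0 y (zero_le y)

lemma gen_subset {S G : Set α} (hG : IsImpFilter G) (hSG : S ⊆ G) : gen S ⊆ G :=
  fun _ hx => hx G ⟨hG, hSG⟩

lemma subset_gen (S : Set α) : S ⊆ gen S := fun _ hx _ hF => hF.2 hx

lemma locFilter_subset_iff {G P : Set α} (hG : IsPrime G) (hP : IsImpFilter P) :
    locFilter P ⊆ G ↔ G ⊆ P ∨ P ⊆ G := by
  constructor
  · intro hL
    by_contra! h
    obtain ⟨x, hxG, hxP⟩ := Set.not_subset.mp h.1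
    exact h.2 fun p hp => hG.1.mem_of_mem_imp hxG (hL (subset_gen _ ⟨x, hxP, p, hp, rfl⟩))
  · intro hcomp
    refine gen_subset hG.1 ?_
    rintro _ ⟨x, hx, p, hp, rfl⟩
    rcases hcomp with hGP | hPG
    · have hone : sup (imp x p) (imp p x) ∈ G := by rw [sup_imp_imp_eq_one]; exact hG.1.1
      exact (hG.2.2 _ _ hone).resolve_right fun h => hx (hP.mem_of_mem_imp hp (hGP h))
    · exact hG.1.2.1 p (hPG hp) _ (le_imp_self p x)

end Filters

structure IsMVHom (f : α → β) : Prop where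
  map_add : ∀ x y, f (x + y) = f x + f y
  map_neg : ∀ x, f (-x) = -f x
  map_zero : f 0 = 0

namespace IsMVHom

variable {f : α → β} (hf : IsMVHom f)
include hf

lemma map_one : f (one α) = one β := by
  show f (-0) = -0
  rw [hf.map_neg, hf.map_zero]

lemma map_imp (a b : α) : f (imp a b) = imp (f a) (f b) := by
  simp only [imp, hf.map_add, hf.map_neg]

lemma map_otimes (a b : α) : f (otimes a b) = otimes (f a) (f b) := by
  simp only [otimes, hf.map_add, hf.map_neg]

lemma map_sup (a b : α) : f (sup a b) = sup (f a) (f b) := by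
  simp only [sup, hf.map_imp]

lemma map_inf (a b : α) : f (inf a b) = inf (f a) (f b) := by
  simp only [inf, hf.map_neg, hf.map_sup]

lemma map_le {a b : α} (h : le a b) : le (f a) (f b) := by
  show imp (f a) (f b) = one β
  rw [← hf.map_imp, show imp a b = one α from h, hf.map_one]

lemma isPrime_preimage {F : Set β} (hF : IsPrime F) : IsPrime (f ⁻¹' F) := by
  obtain ⟨⟨hone, hup, hinf, hotimes⟩, hproper, hprime⟩ := hF
  refine ⟨⟨?_, ?_, ?_, ?_⟩, ?_, ?_⟩
  · simpa only [Set.mem_preimage, hf.map_one] using hone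
  · exact fun x hx y hxy => hup _ hx _ (hf.map_le hxy)
  · intro x hx y hy
    simpa only [Set.mem_preimage, hf.map_inf] using hinf _ hx _ hy
  · intro x hx y hy
    simpa only [Set.mem_preimage, hf.map_otimes] using hotimes _ hx _ hy
  · intro h
    refine hproper (IsImpFilter.eq_univ_of_zero_mem ⟨hone, hup, hinf, hotimes⟩ ?_)
    have h0 : (0 : α) ∈ f ⁻¹' F := h ▸ Set.mem_univ _
    simpa only [Set.mem_preimage, hf.map_zero] using h0
  · intro x y hxy
    exact hprime _ _ (by simpa only [Set.mem_preimage, hf.map_sup] using hxy)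

lemma isPrime_of_isPrime_preimage (hsurj : Function.Surjective f) {F : Set β}
    (hF : IsPrime (f ⁻¹' F)) : IsPrime F := by
  obtain ⟨⟨hone, hup, hinf, hotimes⟩, hproper, hprime⟩ := hF
  refine ⟨⟨?_, ?_, ?_, ?_⟩, ?_, ?_⟩
  · simpa only [Set.mem_preimage, hf.map_one] using hone
  · intro y hy z hyz
    obtain ⟨a, rfl⟩ := hsurj y
    obtain ⟨b, rfl⟩ := hsurj z
    simpa only [Set.mem_preimage, hf.map_sup, sup_eq_right hyz]
      using hup a hy _ (le_sup_left a b)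
  · intro y hy z hz
    obtain ⟨a, rfl⟩ := hsurj y
    obtain ⟨b, rfl⟩ := hsurj z
    simpa only [Set.mem_preimage, hf.map_inf] using hinf a hy b hz
  · intro y hy z hz
    obtain ⟨a, rfl⟩ := hsurj y
    obtain ⟨b, rfl⟩ := hsurj z
    simpa only [Set.mem_preimage, hf.map_otimes] using hotimes a hy b hz
  · rintro rfl
    exact hproper Set.preimage_univ
  · intro y z hyz
    obtain ⟨a, rfl⟩ := hsurj y
    obtain ⟨b, rfl⟩ := hsurj z
    exact hprime a b (by simpa only [Set.mem_preimage, hf.map_sup] using hyz)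

lemma preimage_image_eq {K G : Set α} (hker : ∀ x, f x = one β → x ∈ K)
    (hG : IsImpFilter G) (hKG : K ⊆ G) : f ⁻¹' (f '' G) = G := by
  refine Set.Subset.antisymm ?_ (Set.subset_preimage_image f G)
  rintro a ⟨g, hg, hga⟩
  refine hG.mem_of_mem_imp hg (hKG (hker _ ?_))
  rw [hf.map_imp, hga]
  exact neg_add_self (f a)

/-- The prime spectrum of the quotient of `α` by the kernel `K` of a surjective morphism. -/
def primeSpecOrderIso (hsurj : Function.Surjective f) {K : Set α}
    (hker : ∀ x, f x = one β ↔ x ∈ K) :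
    {F : Set β // IsPrime F} ≃o {G : Set α // IsPrime G ∧ K ⊆ G} where
  toFun F := ⟨f ⁻¹' F.1, hf.isPrime_preimage F.2,
    fun x hx => show f x ∈ F.1 from ((hker x).mpr hx) ▸ F.2.1.1⟩
  invFun G := ⟨f '' G.1, hf.isPrime_of_isPrime_preimage hsurj <| by
    rw [hf.preimage_image_eq (fun x => (hker x).mp) G.2.1.1 G.2.2]; exact G.2.1⟩
  left_inv F := Subtype.ext (Set.image_preimage_eq F.1 hsurj)
  right_inv G := Subtype.ext (hf.preimage_image_eq (fun x => (hker x).mp) G.2.1.1 G.2.2)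
  map_rel_iff' := hsurj.preimage_subset_preimage_iff

end IsMVHom

end MV

open MV
/-- The localization `L/ℓ(P)` is presented as any surjective MV-morphism whose `1`-class is
`ℓ(P)`. -/
theorem pspec_localization_orderIso {α β : Type*} [MV α] [MV β] (f : α → β)
    (hadd : ∀ x y : α, f (x + y) = f x + f y)
    (hneg : ∀ x : α, f (-x) = -f x) (hzero : f 0 = 0)
    (hsurj : Function.Surjective f)
    (P : Set α) (hP : IsPrime P)
    (hker : ∀ x : α, f x = one β ↔ x ∈ locFilter P) :
    Nonempty ({F : Set β // IsPrime F} ≃o {F : Set α // IsPrime F ∧ (F ⊆ P ∨ P ⊆ F)}) :=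
  ⟨(IsMVHom.primeSpecOrderIso ⟨hadd, hneg, hzero⟩ hsurj hker).trans <|
    OrderIso.setCongr _ _ <| Set.ext fun _ =>
      and_congr_right fun hG => locFilter_subset_iff hG hP.1⟩
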